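/- Let a, b, c be strictly positive reals with a + b + c = 1. For n ≥ 2 let P_{n,0} be the total weight of step sequences of length n−1 which, started at height 1, have height ≥ 1 after each of the first n−2 steps and height 0 after the final step, and set P_{0,0} = P_{1,0} = 0. Then ∑_{n=0}^∞ P_{n,0} = min(a, c)/a; that is, the total ruin probability equals 1 when a ≤ c and equals c/a when a > c. -/

import Mathlib

/-!
Let `hitWeight h N` be the weight of the walks of length `N` from height `h` that visit `0`.
Splitting off the last step shows that it is nondecreasing in `N` and that
`hitWeight 1 N = ∑_{n < N + 2} P_{n,0}`; splitting off the first step shows that the limits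
`v h = ruinProb h` satisfy `v h = a v (h + 1) + b v h + c v (h - 1)` for `h ≠ 0`, with `v 0 = 1`.
So the increments of `v` on `h ≥ 0` form a geometric sequence of ratio `c / a`. If `a ≤ c`, the
partial sums of that sequence are unbounded while `0 ≤ v ≤ 1`, which forces `v 1 = 1`. If `a > c`,
the supersolution `(c / a) ^ h` gives `v h → 0`, which forces `v 1 = c / a`.
-/

open Finset

/-- The step sequences of length `L`: functions `Fin L → ℤ` with every value in `{1, 0, -1}`. -/
def stepSeqs (L : ℕ) : Finset (Fin L → ℤ) :=
  Fintype.piFinset fun _ => ({1, 0, -1} : Finset ℤ)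

/-- The weight of a step sequence: `a ^ (#up steps) * b ^ (#flat steps) * c ^ (#down steps)`. -/
def seqWeight (a b c : ℝ) {L : ℕ} (s : Fin L → ℤ) : ℝ :=
  a ^ (Finset.univ.filter (fun i => s i = 1)).card *
    b ^ (Finset.univ.filter (fun i => s i = 0)).card *
      c ^ (Finset.univ.filter (fun i => s i = -1)).card

/-- The height of a step sequence after `i` steps, started at height `h`. -/
def seqHeight {L : ℕ} (h : ℤ) (s : Fin L → ℤ) (i : ℕ) : ℤ :=
  h + ∑ j ∈ Finset.univ.filter (fun j : Fin L => (j : ℕ) < i), s j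

/-- `P n 0`: for `n ≥ 2`, the total weight of step sequences of length `n-1` which, started at
height `1`, have height `≥ 1` after each of the first `n-2` steps and height `0` after the final
step (ruin exactly at size `n`); `P 0 0 = P 1 0 = 0`. -/
def ruinP (a b c : ℝ) (n : ℕ) : ℝ :=
  if 2 ≤ n then
    ∑ s ∈ (stepSeqs (n - 1)).filter
        (fun s => (∀ i ≤ n - 2, 1 ≤ seqHeight 1 s i) ∧ seqHeight 1 s (n - 1) = 0),
      seqWeight a b c s
  else 0

open Filter Topology

section StepSequences

variable {a b c : ℝ}

def stepWeight (a b c : ℝ) (x : ℤ) : ℝ := if x = 1 then a else if x = 0 then b else c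

lemma sum_stepWeight : ∑ x ∈ ({1, 0, -1} : Finset ℤ), stepWeight a b c x = a + b + c := by
  simp [stepWeight, add_assoc]

lemma seqWeight_eq_prod {L : ℕ} {s : Fin L → ℤ} (hs : s ∈ stepSeqs L) :
    seqWeight a b c s = ∏ i, stepWeight a b c (s i) := by
  simp only [seqWeight, ← prod_const, prod_filter, ← prod_mul_distrib]
  refine prod_congr rfl fun i _ => ?_
  have hi : s i ∈ ({1, 0, -1} : Finset ℤ) := Fintype.mem_piFinset.mp hs i
  simp only [mem_insert, mem_singleton] at hi
  rcases hi with hi | hi | hi <;> simp [hi, stepWeight]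

lemma sum_seqWeight (L : ℕ) : ∑ s ∈ stepSeqs L, seqWeight a b c s = (a + b + c) ^ L := by
  rw [sum_congr rfl fun s hs => seqWeight_eq_prod hs, stepSeqs, ← prod_univ_sum, prod_const,
    sum_stepWeight, card_univ, Fintype.card_fin]

lemma seqWeight_nonneg (ha : 0 ≤ a) (hb : 0 ≤ b) (hc : 0 ≤ c) {L : ℕ} (s : Fin L → ℤ) :
    0 ≤ seqWeight a b c s := by
  unfold seqWeight; positivity

lemma stepSeqs_succ_eq_map_cons (N : ℕ) :
    stepSeqs (N + 1) = (({1, 0, -1} : Finset ℤ) ×ˢ stepSeqs N).map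
      (Fin.consEquiv fun _ => ℤ).toEmbedding := by
  have h := filter_piFinset_eq_map_consEquiv
    (fun _ : Fin (N + 1) => ({1, 0, -1} : Finset ℤ)) (fun _ => True)
  rwa [filter_true, filter_true] at h

lemma stepSeqs_succ_eq_map_snoc (N : ℕ) :
    stepSeqs (N + 1) = (({1, 0, -1} : Finset ℤ) ×ˢ stepSeqs N).map
      (Fin.snocEquiv fun _ => ℤ).toEmbedding := by
  have h := filter_piFinset_eq_map_snocEquiv
    (fun _ : Fin (N + 1) => ({1, 0, -1} : Finset ℤ)) (fun _ => True)
  rwa [filter_true, filter_true] at h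

lemma sum_filter_seqWeight_cons {N : ℕ} (P : (Fin (N + 1) → ℤ) → Prop) [DecidablePred P] :
    ∑ s ∈ (stepSeqs (N + 1)).filter P, seqWeight a b c s =
      ∑ x ∈ ({1, 0, -1} : Finset ℤ), stepWeight a b c x *
        ∑ u ∈ (stepSeqs N).filter (fun u => P (Fin.cons x u)), seqWeight a b c u := by
  rw [sum_filter, stepSeqs_succ_eq_map_cons, sum_map, sum_product]
  refine sum_congr rfl fun x hx => ?_
  rw [sum_filter, mul_sum]
  refine sum_congr rfl fun u hu => ?_
  have hxu : (Fin.cons x u : Fin (N + 1) → ℤ) ∈ stepSeqs (N + 1) :=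
    Fintype.mem_piFinset.mpr (Fin.cases hx (Fintype.mem_piFinset.mp hu))
  change (if P (Fin.cons x u) then seqWeight a b c (Fin.cons x u) else 0) = _
  rw [mul_ite, mul_zero, seqWeight_eq_prod hxu, seqWeight_eq_prod hu, Fin.prod_univ_succ]
  simp

lemma sum_filter_seqWeight_snoc {N : ℕ} (P : (Fin (N + 1) → ℤ) → Prop) [DecidablePred P] :
    ∑ s ∈ (stepSeqs (N + 1)).filter P, seqWeight a b c s =
      ∑ x ∈ ({1, 0, -1} : Finset ℤ), stepWeight a b c x *
        ∑ u ∈ (stepSeqs N).filter (fun u => P (Fin.snoc u x)), seqWeight a b c u := by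
  rw [sum_filter, stepSeqs_succ_eq_map_snoc, sum_map, sum_product]
  refine sum_congr rfl fun x hx => ?_
  rw [sum_filter, mul_sum]
  refine sum_congr rfl fun u hu => ?_
  have hxu : (Fin.snoc u x : Fin (N + 1) → ℤ) ∈ stepSeqs (N + 1) :=
    Fintype.mem_piFinset.mpr (Fin.lastCases (by simpa using hx)
      fun i => by simpa using Fintype.mem_piFinset.mp hu i)
  change (if P (Fin.snoc u x) then seqWeight a b c (Fin.snoc u x) else 0) = _
  rw [mul_ite, mul_zero, seqWeight_eq_prod hxu, seqWeight_eq_prod hu, Fin.prod_univ_castSucc]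
  simp [mul_comm]

end StepSequences

section Heights

lemma seqHeight_zero {L : ℕ} (h : ℤ) (s : Fin L → ℤ) : seqHeight h s 0 = h := by
  simp [seqHeight]

lemma seqHeight_succ {L : ℕ} (h : ℤ) (s : Fin L → ℤ) {i : ℕ} (hi : i < L) :
    seqHeight h s (i + 1) = seqHeight h s i + s ⟨i, hi⟩ := by
  have hsplit : univ.filter (fun j : Fin L => (j : ℕ) < i + 1) =
      insert ⟨i, hi⟩ (univ.filter fun j : Fin L => (j : ℕ) < i) := by
    ext j
    simp only [mem_filter, mem_univ, true_and, mem_insert, Fin.ext_iff]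
    omega
  rw [seqHeight, seqHeight, hsplit, sum_insert (by simp)]
  ring

lemma seqHeight_cons_succ {N : ℕ} (h x : ℤ) (u : Fin N → ℤ) (i : ℕ) :
    seqHeight h (Fin.cons x u) (i + 1) = seqHeight (h + x) u i := by
  simp only [seqHeight, sum_filter, Fin.sum_univ_succ, Fin.cons_zero, Fin.cons_succ, Fin.val_zero,
    Fin.val_succ, Nat.succ_lt_succ_iff, Nat.zero_lt_succ, if_true, add_assoc]

lemma seqHeight_snoc_of_le {N : ℕ} (h x : ℤ) (u : Fin N → ℤ) {i : ℕ} (hi : i ≤ N) :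
    seqHeight h (Fin.snoc u x) i = seqHeight h u i := by
  simp only [seqHeight, sum_filter, Fin.sum_univ_castSucc, Fin.snoc_castSucc, Fin.snoc_last,
    Fin.val_castSucc, Fin.val_last, hi.not_gt, if_false, add_zero]

lemma seqHeight_snoc_last {N : ℕ} (h x : ℤ) (u : Fin N → ℤ) :
    seqHeight h (Fin.snoc u x) (N + 1) = seqHeight h u N + x := by
  simp only [seqHeight, sum_filter, Fin.sum_univ_castSucc, Fin.snoc_castSucc, Fin.snoc_last,
    if_true, Fin.is_lt, add_assoc]

lemma exists_seqHeight_cons_eq_zero_iff {N : ℕ} {h : ℤ} (hh : h ≠ 0) (x : ℤ) (u : Fin N → ℤ) :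
    (∃ i ≤ N + 1, seqHeight h (Fin.cons x u) i = 0) ↔ ∃ i ≤ N, seqHeight (h + x) u i = 0 := by
  refine ⟨?_, fun ⟨i, hi, hzero⟩ => ⟨i + 1, by omega, by rwa [seqHeight_cons_succ]⟩⟩
  rintro ⟨_ | i, hi, hzero⟩
  · exact absurd (seqHeight_zero h _ ▸ hzero) hh
  · exact ⟨i, by omega, by rwa [seqHeight_cons_succ] at hzero⟩

lemma exists_seqHeight_snoc_eq_zero_iff {N : ℕ} (h x : ℤ) (u : Fin N → ℤ) :
    (∃ i ≤ N + 1, seqHeight h (Fin.snoc u x) i = 0) ↔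
      (∃ i ≤ N, seqHeight h u i = 0) ∨ seqHeight h u N + x = 0 := by
  refine ⟨?_, ?_⟩
  · rintro ⟨i, hi, hzero⟩
    rcases Nat.lt_or_ge i (N + 1) with hlt | hge
    · rw [seqHeight_snoc_of_le h x u (by omega)] at hzero
      exact Or.inl ⟨i, by omega, hzero⟩
    · rw [show i = N + 1 by omega, seqHeight_snoc_last] at hzero
      exact Or.inr hzero
  · rintro (⟨i, hi, hzero⟩ | hzero)
    · exact ⟨i, by omega, by rwa [seqHeight_snoc_of_le h x u hi]⟩
    · exact ⟨N + 1, le_rfl, by rwa [seqHeight_snoc_last]⟩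

/-- A walk with steps in `{1, 0, -1}` cannot cross `0` without landing on it. -/
lemma seqHeight_pos_of_ne_zero {L : ℕ} {h : ℤ} {s : Fin L → ℤ} (hs : s ∈ stepSeqs L) (hh : 0 < h)
    {k : ℕ} (hk : k ≤ L) (hne : ∀ i ≤ k, seqHeight h s i ≠ 0) : 0 < seqHeight h s k := by
  induction k with
  | zero => rwa [seqHeight_zero]
  | succ k ih =>
    have hstep : s ⟨k, hk⟩ ∈ ({1, 0, -1} : Finset ℤ) := Fintype.mem_piFinset.mp hs _
    simp only [mem_insert, mem_singleton] at hstep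
    have hprev := ih (by omega) fun i hi => hne i (by omega)
    have hlast := hne (k + 1) le_rfl
    rw [seqHeight_succ h s hk] at hlast ⊢
    omega

end Heights

section Hitting

variable {a b c : ℝ}

def hitWeight (a b c : ℝ) (h : ℤ) (N : ℕ) : ℝ :=
  ∑ s ∈ (stepSeqs N).filter (fun s => ∃ i ≤ N, seqHeight h s i = 0), seqWeight a b c s

def firstHitWeight (a b c : ℝ) (h : ℤ) (N : ℕ) : ℝ :=
  ∑ s ∈ (stepSeqs N).filter (fun s => (∀ i < N, seqHeight h s i ≠ 0) ∧ seqHeight h s N = 0),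
    seqWeight a b c s

lemma hitWeight_le_one (ha : 0 ≤ a) (hb : 0 ≤ b) (hc : 0 ≤ c) (habc : a + b + c = 1) (h : ℤ)
    (N : ℕ) : hitWeight a b c h N ≤ 1 :=
  calc hitWeight a b c h N ≤ ∑ s ∈ stepSeqs N, seqWeight a b c s :=
        sum_le_sum_of_subset_of_nonneg (filter_subset _ _) fun s _ _ =>
          seqWeight_nonneg ha hb hc s
    _ = 1 := by rw [sum_seqWeight, habc, one_pow]

lemma hitWeight_zero_start (habc : a + b + c = 1) (N : ℕ) : hitWeight a b c 0 N = 1 := by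
  rw [hitWeight, filter_true_of_mem fun s _ => ⟨0, N.zero_le, seqHeight_zero 0 s⟩, sum_seqWeight,
    habc, one_pow]

lemma hitWeight_zero_length {h : ℤ} (hh : h ≠ 0) : hitWeight a b c h 0 = 0 := by
  rw [hitWeight, filter_false_of_mem, sum_empty]
  rintro s _ ⟨i, hi, hzero⟩
  rw [Nat.le_zero.mp hi, seqHeight_zero] at hzero
  exact hh hzero

lemma hitWeight_succ_of_ne_zero {h : ℤ} (hh : h ≠ 0) (N : ℕ) :
    hitWeight a b c h (N + 1) =
      a * hitWeight a b c (h + 1) N + b * hitWeight a b c h N + c * hitWeight a b c (h - 1) N := by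
  simp only [hitWeight, sum_filter_seqWeight_cons, exists_seqHeight_cons_eq_zero_iff hh]
  simp [stepWeight, sub_eq_add_neg, add_assoc]

lemma hitWeight_succ (habc : a + b + c = 1) (h : ℤ) (N : ℕ) :
    hitWeight a b c h (N + 1) = hitWeight a b c h N + firstHitWeight a b c h (N + 1) := by
  have hfirst : ∀ (x : ℤ) (u : Fin N → ℤ),
      ((∀ i < N + 1, seqHeight h (Fin.snoc u x) i ≠ 0) ∧ seqHeight h (Fin.snoc u x) (N + 1) = 0) ↔
        (¬ ∃ i ≤ N, seqHeight h u i = 0) ∧ seqHeight h u N + x = 0 := by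
    intro x u
    simp only [seqHeight_snoc_last, Nat.lt_succ_iff, not_exists, not_and]
    refine and_congr_left fun _ => forall₂_congr fun i hi => ?_
    rw [seqHeight_snoc_of_le h x u hi]
  have hsplit : ∀ x : ℤ,
      ∑ u ∈ (stepSeqs N).filter (fun u => (∃ i ≤ N, seqHeight h u i = 0) ∨ seqHeight h u N + x = 0),
        seqWeight a b c u = hitWeight a b c h N +
      ∑ u ∈ (stepSeqs N).filter (fun u => (¬ ∃ i ≤ N, seqHeight h u i = 0) ∧
        seqHeight h u N + x = 0), seqWeight a b c u := by
    intro x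
    rw [← sum_filter_add_sum_filter_not _ fun u => ∃ i ≤ N, seqHeight h u i = 0, filter_filter,
      filter_filter, hitWeight]
    congr 2 <;> refine filter_congr fun u _ => ?_ <;>
      by_cases hu : ∃ i ≤ N, seqHeight h u i = 0 <;> simp [hu]
  rw [hitWeight, firstHitWeight, sum_filter_seqWeight_snoc, sum_filter_seqWeight_snoc]
  simp only [exists_seqHeight_snoc_eq_zero_iff, hfirst, hsplit, mul_add, sum_add_distrib,
    ← sum_mul, sum_stepWeight, habc, one_mul]

lemma hitWeight_monotone (ha : 0 ≤ a) (hb : 0 ≤ b) (hc : 0 ≤ c) (habc : a + b + c = 1)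
    (h : ℤ) : Monotone (hitWeight a b c h) :=
  monotone_nat_of_le_succ fun N => by
    rw [hitWeight_succ habc]
    exact le_add_of_nonneg_right (sum_nonneg fun s _ => seqWeight_nonneg ha hb hc s)

/-- `(c / a) ^ h` solves the first-step recurrence and dominates the boundary values. -/
lemma hitWeight_le_pow (ha : 0 < a) (hb : 0 ≤ b) (hc : 0 ≤ c) (habc : a + b + c = 1) (N : ℕ) :
    ∀ h : ℕ, hitWeight a b c h N ≤ (c / a) ^ h := by
  induction N with
  | zero =>
    rintro (_ | h)
    · simp [hitWeight_zero_start habc]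
    · rw [hitWeight_zero_length (by omega)]; positivity
  | succ N ih =>
    rintro (_ | h)
    · simp [hitWeight_zero_start habc]
    · have hrec : a * (c / a) ^ (h + 2) + b * (c / a) ^ (h + 1) + c * (c / a) ^ h =
          (c / a) ^ (h + 1) := by
        have haq : a * (c / a) = c := mul_div_cancel₀ c ha.ne'
        linear_combination ((c / a) ^ (h + 1) - (c / a) ^ h) * haq + (c / a) ^ (h + 1) * habc
      rw [hitWeight_succ_of_ne_zero (by omega), ← hrec]
      have h₁ := ih (h + 2)
      have h₂ := ih (h + 1)
      have h₃ := ih h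
      push_cast at h₁ h₂ h₃ ⊢
      rw [show (h : ℤ) + 1 + 1 = h + 2 by ring, add_sub_cancel_right]
      gcongr

end Hitting

section RuinProbability

variable {a b c : ℝ}

lemma ruinP_nonneg (ha : 0 ≤ a) (hb : 0 ≤ b) (hc : 0 ≤ c) (n : ℕ) : 0 ≤ ruinP a b c n := by
  unfold ruinP
  split
  · exact sum_nonneg fun s _ => seqWeight_nonneg ha hb hc s
  · exact le_rfl

lemma ruinP_add_two (N : ℕ) : ruinP a b c (N + 2) = firstHitWeight a b c 1 (N + 1) := by
  rw [ruinP, if_pos (by omega), firstHitWeight, Nat.add_sub_cancel,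
    show N + 2 - 1 = N + 1 from rfl]
  refine sum_congr (filter_congr fun s hs => and_congr_left fun _ => ⟨?_, ?_⟩) fun _ _ => rfl
  · exact fun hpos i hi => (zero_lt_one.trans_le (hpos i (by omega))).ne'
  · exact fun hne i hi =>
      seqHeight_pos_of_ne_zero hs one_pos (by omega) fun j hj => hne j (by omega)

lemma sum_range_ruinP (habc : a + b + c = 1) (N : ℕ) :
    ∑ n ∈ range (N + 2), ruinP a b c n = hitWeight a b c 1 N := by
  induction N with
  | zero => simp [sum_range_succ, ruinP, hitWeight_zero_length]
  | succ N ih => rw [sum_range_succ, ih, hitWeight_succ habc, ruinP_add_two]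

noncomputable def ruinProb (a b c : ℝ) (h : ℤ) : ℝ := ⨆ N, hitWeight a b c h N

lemma tendsto_hitWeight (ha : 0 ≤ a) (hb : 0 ≤ b) (hc : 0 ≤ c) (habc : a + b + c = 1) (h : ℤ) :
    Tendsto (hitWeight a b c h) atTop (𝓝 (ruinProb a b c h)) :=
  tendsto_atTop_ciSup (hitWeight_monotone ha hb hc habc h)
    ⟨1, Set.forall_mem_range.2 (hitWeight_le_one ha hb hc habc h)⟩

lemma hasSum_ruinP (ha : 0 ≤ a) (hb : 0 ≤ b) (hc : 0 ≤ c) (habc : a + b + c = 1) :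
    HasSum (ruinP a b c) (ruinProb a b c 1) := by
  rw [hasSum_iff_tendsto_nat_of_nonneg (ruinP_nonneg ha hb hc), ← tendsto_add_atTop_iff_nat 2]
  simpa only [sum_range_ruinP habc] using tendsto_hitWeight ha hb hc habc 1

lemma ruinProb_zero (habc : a + b + c = 1) : ruinProb a b c 0 = 1 := by
  simp [ruinProb, hitWeight_zero_start habc]

lemma ruinProb_nonneg (ha : 0 ≤ a) (hb : 0 ≤ b) (hc : 0 ≤ c) (habc : a + b + c = 1) (h : ℤ) :
    0 ≤ ruinProb a b c h :=
  ge_of_tendsto' (tendsto_hitWeight ha hb hc habc h) fun _ =>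
    sum_nonneg fun s _ => seqWeight_nonneg ha hb hc s

lemma ruinProb_le_one (ha : 0 ≤ a) (hb : 0 ≤ b) (hc : 0 ≤ c) (habc : a + b + c = 1) (h : ℤ) :
    ruinProb a b c h ≤ 1 :=
  le_of_tendsto' (tendsto_hitWeight ha hb hc habc h) (hitWeight_le_one ha hb hc habc h)

lemma ruinProb_le_pow (ha : 0 < a) (hb : 0 ≤ b) (hc : 0 ≤ c) (habc : a + b + c = 1) (h : ℕ) :
    ruinProb a b c h ≤ (c / a) ^ h :=
  le_of_tendsto' (tendsto_hitWeight ha.le hb hc habc h) fun N => hitWeight_le_pow ha hb hc habc N h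

lemma ruinProb_eq_of_ne_zero (ha : 0 ≤ a) (hb : 0 ≤ b) (hc : 0 ≤ c) (habc : a + b + c = 1)
    {h : ℤ} (hh : h ≠ 0) :
    ruinProb a b c h =
      a * ruinProb a b c (h + 1) + b * ruinProb a b c h + c * ruinProb a b c (h - 1) := by
  have hlim := tendsto_hitWeight ha hb hc habc
  refine tendsto_nhds_unique ((hlim h).comp (tendsto_add_atTop_nat 1)) ?_
  simp only [Function.comp_def, hitWeight_succ_of_ne_zero hh]
  exact (((hlim _).const_mul a).add ((hlim h).const_mul b)).add ((hlim _).const_mul c)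

end RuinProbability

section HarmonicSequences

variable {a b c : ℝ} {v : ℕ → ℝ}

lemma sub_eq_pow_mul_of_harmonic (ha : a ≠ 0) (habc : a + b + c = 1)
    (hv : ∀ h, v (h + 1) = a * v (h + 2) + b * v (h + 1) + c * v h) (h : ℕ) :
    v (h + 1) - v h = (c / a) ^ h * (v 1 - v 0) := by
  induction h with
  | zero => simp
  | succ h ih =>
    rw [pow_succ', mul_assoc, ← ih, div_mul_eq_mul_div, eq_div_iff ha]
    linear_combination -(hv h) - v (h + 1) * habc

lemma eq_add_mul_geom_sum_of_harmonic (ha : a ≠ 0) (habc : a + b + c = 1)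
    (hv : ∀ h, v (h + 1) = a * v (h + 2) + b * v (h + 1) + c * v h) (h : ℕ) :
    v h = v 0 + (v 1 - v 0) * ∑ k ∈ range h, (c / a) ^ k := by
  rw [mul_sum]
  simp_rw [mul_comm (v 1 - v 0), ← sub_eq_pow_mul_of_harmonic ha habc hv]
  rw [sum_range_sub]
  ring

lemma harmonic_one_eq_one_of_le (ha : 0 < a) (hac : a ≤ c) (habc : a + b + c = 1)
    (hv : ∀ h, v (h + 1) = a * v (h + 2) + b * v (h + 1) + c * v h) (hv0 : v 0 = 1)
    (hv1 : v 1 ≤ 1) (hnonneg : ∀ h, 0 ≤ v h) : v 1 = 1 := by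
  by_contra hne
  have hd : 0 < 1 - v 1 := sub_pos.mpr (lt_of_le_of_ne hv1 hne)
  obtain ⟨n, hn⟩ := exists_nat_gt (1 / (1 - v 1))
  have hgeom : (n : ℝ) ≤ ∑ k ∈ range n, (c / a) ^ k := by
    simpa using sum_le_sum fun k (_ : k ∈ range n) => one_le_pow₀ ((one_le_div ha).mpr hac)
  have hvn := eq_add_mul_geom_sum_of_harmonic ha.ne' habc hv n
  rw [div_lt_iff₀ hd] at hn
  have hvn_le : v n ≤ 1 - (1 - v 1) * n := by
    rw [hvn, hv0]
    nlinarith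
  linarith [hnonneg n]

lemma harmonic_one_eq_div_of_lt (ha : 0 < a) (hc : 0 ≤ c) (hca : c < a) (habc : a + b + c = 1)
    (hv : ∀ h, v (h + 1) = a * v (h + 2) + b * v (h + 1) + c * v h) (hv0 : v 0 = 1)
    (hnonneg : ∀ h, 0 ≤ v h) (hle_pow : ∀ h, v h ≤ (c / a) ^ h) : v 1 = c / a := by
  have hq0 : 0 ≤ c / a := div_nonneg hc ha.le
  have hq1 : c / a < 1 := (div_lt_one ha).mpr hca
  have hlim_zero : Tendsto v atTop (𝓝 0) :=
    squeeze_zero hnonneg hle_pow (tendsto_pow_atTop_nhds_zero_of_lt_one hq0 hq1)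
  have hlim_geom : Tendsto v atTop (𝓝 (1 + (v 1 - 1) * (1 - c / a)⁻¹)) := by
    have hsum := (hasSum_geometric_of_lt_one hq0 hq1).tendsto_sum_nat
    refine ((hsum.const_mul (v 1 - 1)).const_add 1).congr fun h => ?_
    rw [eq_add_mul_geom_sum_of_harmonic ha.ne' habc hv h, hv0]
  have hzero := tendsto_nhds_unique hlim_geom hlim_zero
  have hac : a - c ≠ 0 := by linarith
  field_simp at hzero
  rw [eq_div_iff ha.ne']
  linarith

lemma harmonic_one_eq_min (ha : 0 < a) (hc : 0 ≤ c) (habc : a + b + c = 1)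
    (hv : ∀ h, v (h + 1) = a * v (h + 2) + b * v (h + 1) + c * v h) (hv0 : v 0 = 1)
    (hnonneg : ∀ h, 0 ≤ v h) (hle_one : ∀ h, v h ≤ 1) (hle_pow : ∀ h, v h ≤ (c / a) ^ h) :
    v 1 = min a c / a := by
  rcases le_or_gt a c with hac | hca
  · rw [min_eq_left hac, div_self ha.ne']
    exact harmonic_one_eq_one_of_le ha hac habc hv hv0 (hle_one 1) hnonneg
  · rw [min_eq_right hca.le]
    exact harmonic_one_eq_div_of_lt ha hc hca habc hv hv0 hnonneg hle_pow

end HarmonicSequences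

/-- the total ruin probability is `min(a,c)/a`: it is `1` when `a ≤ c`
and `c/a` when `a > c`. -/
theorem total_ruin_probability (a b c : ℝ) (ha : 0 < a) (hb : 0 < b) (hc : 0 < c)
    (habc : a + b + c = 1) :
    ∑' n : ℕ, ruinP a b c n = min a c / a := by
  rw [(hasSum_ruinP ha.le hb.le hc.le habc).tsum_eq]
  have hharmonic : ∀ h : ℕ, ruinProb a b c ↑(h + 1) =
      a * ruinProb a b c ↑(h + 2) + b * ruinProb a b c ↑(h + 1) + c * ruinProb a b c ↑h := by
    intro h
    have := ruinProb_eq_of_ne_zero ha.le hb.le hc.le habc (h := ↑(h + 1)) (by omega)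
    rwa [Nat.cast_succ h, add_sub_cancel_right, ← Nat.cast_succ, ← Nat.cast_succ] at this
  exact harmonic_one_eq_min (v := fun h : ℕ => ruinProb a b c h) ha hc.le habc hharmonic
    (ruinProb_zero habc) (fun h => ruinProb_nonneg ha.le hb.le hc.le habc h)
    (fun h => ruinProb_le_one ha.le hb.le hc.le habc h) (ruinProb_le_pow ha hb.le hc.le habc)
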